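/- Let α ∈ (0,1], let κ be a real number with 0 ≤ κ ≤ α/2, and let a be a populated pre-multi-index. Then |a| + (α−1−κ)·(𝔰(a^𝔠) + 2𝔰(a^𝔢) + 𝔰(a^𝔣)) ≥ −2 + α·(𝔰(a^𝔟)+𝔰(a^𝔠)+𝔰(a^𝔢)+𝔰(a^𝔥)) + (α−2κ)·𝔰(a^𝔢) + (1−α)·𝔰(a^𝔠) + 𝔰(a^𝔡) + (2−α)·𝔰(a^𝔟), and consequently |a| + (α−1−κ)·(𝔰(a^𝔠) + 2𝔰(a^𝔢) + 𝔰(a^𝔣)) ≥ −2 + α. -/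

import Mathlib

/-- The seven labels 𝔅 = {𝔟,𝔠,𝔡,𝔢,𝔣,𝔤,𝔥}. -/
inductive Lbl : Type
  | b | c | d | e | f | g | h
  deriving DecidableEq

instance : Fintype Lbl :=
  ⟨{Lbl.b, Lbl.c, Lbl.d, Lbl.e, Lbl.f, Lbl.g, Lbl.h}, fun x => by cases x <;> simp⟩

/-- Size 𝔰(q) = Σᵢ qᵢ of a finitely supported sequence. -/
def seqSize (q : ℕ →₀ ℕ) : ℕ := q.sum fun _ n => n

/-- Order 𝔬(q) = Σᵢ i·qᵢ of a finitely supported sequence. -/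
def seqOrder (q : ℕ →₀ ℕ) : ℕ := q.sum fun i n => i * n

/-- Length 𝔩(q) = max of the support of q (0 if q = 0). -/
def seqLen (q : ℕ →₀ ℕ) : ℕ := q.support.sup id

/-- A pre-multi-index: a family of seven finitely supported sequences. -/
abbrev PMI : Type := Lbl → (ℕ →₀ ℕ)

/-- Size of a pre-multi-index. -/
def pmiSize (a : PMI) : ℕ := ∑ k : Lbl, seqSize (a k)

/-- Order of a pre-multi-index. -/
def pmiOrder (a : PMI) : ℕ :=
  (∑ k : Lbl, seqOrder (a k)) + seqSize (a Lbl.d) + seqSize (a Lbl.f)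
    + 2 * seqSize (a Lbl.g)

/-- Length of a pre-multi-index. -/
def pmiLen (a : PMI) : ℕ := Finset.univ.sup fun k : Lbl => seqLen (a k)

/-- A pre-multi-index is populated if 𝔰(a) = 𝔬(a) + 1. -/
def Populated (a : PMI) : Prop := pmiSize a = pmiOrder a + 1

/-- The scaling |a| of a pre-multi-index, for a real parameter α. -/
noncomputable def scaling (α : ℝ) (a : PMI) : ℝ :=
  -(2 - α) * (pmiSize a : ℝ) + 2 * (pmiOrder a : ℝ)
    + (2 - α) * ((seqSize (a Lbl.b) : ℝ) + (seqSize (a Lbl.c) : ℝ) + (seqSize (a Lbl.e) : ℝ))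
    + (1 - α) * ((seqSize (a Lbl.d) : ℝ) + (seqSize (a Lbl.f) : ℝ))
    - α * (seqSize (a Lbl.g) : ℝ)

/-- 1^𝔨_k : the pre-multi-index whose only nonzero entry is a single 1 in the
𝔨-component at index k. -/
noncomputable def onePMI (k : Lbl) (n : ℕ) : PMI :=
  fun k' => if k' = k then Finsupp.single n 1 else 0

/-- A derivator (𝔨₀,𝔨₁,k₀,k₁). -/
def IsDerivator (l₀ l₁ : Lbl) (k₀ k₁ : ℕ) : Prop :=
  (l₀ = l₁ ∧ k₁ = k₀ + 1) ∨
    (((l₀ = Lbl.c ∧ l₁ = Lbl.d) ∨ (l₀ = Lbl.e ∧ l₁ = Lbl.f) ∨ (l₀ = Lbl.f ∧ l₁ = Lbl.g))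
      ∧ k₁ = k₀)

/-!
Populatedness says 𝔰(a^𝔟) + 𝔰(a^𝔠) + 𝔰(a^𝔢) + 𝔰(a^𝔥) = Σ_𝔨 𝔬(a^𝔨) + 𝔰(a^𝔤) + 1 ≥ 1, and it lets one
eliminate 𝔬(a) = 𝔰(a) - 1 from |a|, leaving an affine expression in the sizes 𝔰(a^𝔨) alone. Both
inequalities are then nonnegativity of explicit combinations of sizes with coefficients that are
nonnegative for 2κ ≤ α ≤ 1.
-/

theorem Lbl.sum_univ {M : Type*} [AddCommMonoid M] (f : Lbl → M) :
    ∑ k, f k = f .b + f .c + f .d + f .e + f .f + f .g + f .h := by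
  simp [Finset.univ, Fintype.elems, add_assoc]

theorem Populated.seqSize_b_add_c_add_e_add_h_eq {a : PMI} (ha : Populated a) :
    seqSize (a .b) + seqSize (a .c) + seqSize (a .e) + seqSize (a .h)
      = ∑ k, seqOrder (a k) + seqSize (a .g) + 1 := by
  unfold Populated pmiSize pmiOrder at ha
  rw [Lbl.sum_univ] at ha
  omega

theorem Populated.scaling_eq {a : PMI} (ha : Populated a) (α : ℝ) :
    scaling α a = -2 + α * (seqSize (a .b) + seqSize (a .c) + seqSize (a .e) + seqSize (a .h))
      + (2 - α) * (seqSize (a .b) + seqSize (a .c) + seqSize (a .e))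
      + seqSize (a .d) + seqSize (a .f) := by
  have hsize : (pmiSize a : ℝ) = seqSize (a .b) + seqSize (a .c) + seqSize (a .d)
      + seqSize (a .e) + seqSize (a .f) + seqSize (a .g) + seqSize (a .h) := by
    rw [pmiSize, Lbl.sum_univ]
    push_cast
    rfl
  have horder : (pmiOrder a : ℝ) = pmiSize a - 1 := by
    rw [show pmiSize a = pmiOrder a + 1 from ha]
    push_cast
    ring
  rw [scaling, horder, hsize]
  ring

theorem stmt8_general (α κ : ℝ) (hα : α ∈ Set.Ioc (0:ℝ) 1) (hκ : κ ≤ α / 2)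
    (a : PMI) (ha : Populated a) :
    (-2 + α * ((seqSize (a Lbl.b) : ℝ) + (seqSize (a Lbl.c) : ℝ)
          + (seqSize (a Lbl.e) : ℝ) + (seqSize (a Lbl.h) : ℝ))
        + (α - 2 * κ) * (seqSize (a Lbl.e) : ℝ)
        + (1 - α) * (seqSize (a Lbl.c) : ℝ)
        + (seqSize (a Lbl.d) : ℝ)
        + (2 - α) * (seqSize (a Lbl.b) : ℝ)
      ≤ scaling α a + (α - 1 - κ) * ((seqSize (a Lbl.c) : ℝ)
          + 2 * (seqSize (a Lbl.e) : ℝ) + (seqSize (a Lbl.f) : ℝ)))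
    ∧ (-2 + α
      ≤ scaling α a + (α - 1 - κ) * ((seqSize (a Lbl.c) : ℝ)
          + 2 * (seqSize (a Lbl.e) : ℝ) + (seqSize (a Lbl.f) : ℝ))) := by
  obtain ⟨hα0, hα1⟩ := hα
  have hbceh : (1 : ℝ) ≤ seqSize (a .b) + seqSize (a .c) + seqSize (a .e) + seqSize (a .h) := by
    exact_mod_cast ha.seqSize_b_add_c_add_e_add_h_eq ▸ Nat.le_add_left 1 _
  rw [ha.scaling_eq]
  -- The two gaps are (α - κ)(𝔰(a^𝔠) + 𝔰(a^𝔣)) and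
  -- α(𝔰(a^𝔟) + 𝔰(a^𝔠) + 𝔰(a^𝔢) + 𝔰(a^𝔥) - 1) + (α - 2κ)𝔰(a^𝔢) + (1 - α)𝔰(a^𝔠) + 𝔰(a^𝔡) + (2 - α)𝔰(a^𝔟).
  refine ⟨?_, ?_⟩ <;>
    nlinarith [Nat.cast_nonneg (α := ℝ) (seqSize (a .b)), Nat.cast_nonneg (α := ℝ) (seqSize (a .c)),
      Nat.cast_nonneg (α := ℝ) (seqSize (a .d)), Nat.cast_nonneg (α := ℝ) (seqSize (a .e)),
      Nat.cast_nonneg (α := ℝ) (seqSize (a .f))]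

theorem stmt8 (α κ : ℝ) (hα : α ∈ Set.Ioc (0:ℝ) 1) (hκ0 : 0 ≤ κ) (hκ : κ ≤ α / 2)
    (a : PMI) (ha : Populated a) :
    (-2 + α * ((seqSize (a Lbl.b) : ℝ) + (seqSize (a Lbl.c) : ℝ)
          + (seqSize (a Lbl.e) : ℝ) + (seqSize (a Lbl.h) : ℝ))
        + (α - 2 * κ) * (seqSize (a Lbl.e) : ℝ)
        + (1 - α) * (seqSize (a Lbl.c) : ℝ)
        + (seqSize (a Lbl.d) : ℝ)
        + (2 - α) * (seqSize (a Lbl.b) : ℝ)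
      ≤ scaling α a + (α - 1 - κ) * ((seqSize (a Lbl.c) : ℝ)
          + 2 * (seqSize (a Lbl.e) : ℝ) + (seqSize (a Lbl.f) : ℝ)))
    ∧ (-2 + α
      ≤ scaling α a + (α - 1 - κ) * ((seqSize (a Lbl.c) : ℝ)
          + 2 * (seqSize (a Lbl.e) : ℝ) + (seqSize (a Lbl.f) : ℝ))) :=
  stmt8_general α κ hα hκ a ha
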